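/- Let n ≥ 1, let K ⊂ ℝⁿ be a convex body and let ν ∈ (0, |K|]. Then there exists r = r(ν, K) > 0 such that for every convex body P ⊆ K with |P| ≥ ν and every integer k > n^{3/2}/(2r), there exists a point p ∈ P such that the set P_p := (1 − n^{3/2}/(2rk))^{1/n}·(P − p) + p satisfies both P_p ⊆ P and P_p ⊆ (P ∩ ℤⁿ/k) + [−1/2, 1/2]ⁿ/k. -/

import Mathlib

open MeasureTheory Set Pointwise

/-- The rescaled lattice `ℤⁿ/k` inside `ℝⁿ`. -/
def lpts (n k : ℕ) : Set (EuclideanSpace ℝ (Fin n)) :=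
  {x | ∀ i, ∃ m : ℤ, (k : ℝ) * x i = (m : ℝ)}

/-- The cube `[−1/(2k), 1/(2k)]ⁿ` inside `ℝⁿ`. -/
def smallCube (n k : ℕ) : Set (EuclideanSpace ℝ (Fin n)) :=
  {x | ∀ i, |x i| ≤ 1 / (2 * (k : ℝ))}

/-!
Let `P ⊆ K` be a convex body with `|P| ≥ ν`. Among the simplices `x, x + w₁, …, x + wₙ` in `P`,
with `x` an interior point, take one of maximal volume `|det w|`. By Cramer's rule, maximality
says that every point of `P` has coordinates in `[-1, 1]` with respect to `w`, so
`ν ≤ |P| ≤ 2ⁿ |det w|`. Since `|det v| ≤ C ∏ ‖vᵢ‖`, Cramer's rule also bounds the `w`-coordinates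
of a vector `u` by `C diam(K)ⁿ ‖u‖ / |det w|`, so the simplex, hence `P`, contains a ball of a
radius `r` depending only on `ν` and `K`.

If `B(p, r) ⊆ P`, the homothety with centre `p` and ratio `λ = (1 - n^{3/2}/(2rk))^{1/n}`, which
is at most `1 - √n/(2rk)` by Bernoulli's inequality, maps `P` to points whose `√n/(2k)`-balls lie
in `P`. Rounding such a point to `ℤⁿ/k` moves it by a vector of the cube `[-1/(2k), 1/(2k)]ⁿ`,
whose Euclidean length is at most `√n/(2k)`.
-/

open Metric

section

variable {ι E : Type*} [Fintype ι] [NormedAddCommGroup E] [NormedSpace ℝ E]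

theorem Convex.add_sum_smul_mem {P : Set E} (hP : Convex ℝ P) {x : E} {w : ι → E} {t : ι → ℝ}
    (hx : x ∈ P) (hw : ∀ i, x + w i ∈ P) (ht₀ : ∀ i, 0 ≤ t i) (ht₁ : ∑ i, t i ≤ 1) :
    x + ∑ i, t i • w i ∈ P := by
  have hcomb : x + ∑ i, t i • w i =
      ∑ o : Option ι, o.elim (1 - ∑ i, t i) t • o.elim x (fun i => x + w i) := by
    simp only [Fintype.sum_option, Option.elim_none, Option.elim_some, smul_add, sub_smul,
      one_smul, Finset.sum_add_distrib, Finset.sum_smul]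
    abel
  rw [hcomb]
  refine hP.sum_mem ?_ ?_ ?_
  · rintro (_ | i) - <;> simp [ht₀, ht₁]
  · simp [Fintype.sum_option]
  · rintro (_ | i) - <;> simp [hx, hw]

theorem Convex.closedBall_subset_of_abs_repr_le {P : Set E} (hP : Convex ℝ P) {x : E}
    (B : Module.Basis ι ℝ E) {r q : ℝ} (hx : x ∈ P) (hB : ∀ i, x + B i ∈ P)
    (hq : ∀ u, ‖u‖ ≤ r → ∀ i, |B.repr u i| ≤ q) (hnq : Fintype.card ι * (2 * q) ≤ 1) :
    closedBall (x + ∑ i, q • B i) r ⊆ P := by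
  intro y hy
  set u := y - (x + ∑ i, q • B i)
  have hu := hq u (by rwa [← dist_eq_norm])
  have hy : y = x + ∑ i, (q + B.repr u i) • B i := by
    simp only [add_smul, Finset.sum_add_distrib, B.sum_repr, u]
    abel
  rw [hy]
  refine hP.add_sum_smul_mem hx hB (fun i => by linarith [abs_le.1 (hu i)]) ?_
  calc ∑ i, (q + B.repr u i) ≤ ∑ _i : ι, 2 * q :=
        Finset.sum_le_sum fun i _ => by linarith [abs_le.1 (hu i)]
    _ ≤ 1 := by simpa using hnq

theorem Convex.closedBall_homothety_subset {P : Set E} (hP : Convex ℝ P) {p x : E} {r l : ℝ}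
    (hball : closedBall p r ⊆ P) (hx : x ∈ P) (hl₀ : 0 ≤ l) (hl₁ : l < 1) :
    closedBall (l • (x - p) + p) ((1 - l) * r) ⊆ P := by
  intro z hz
  have hl : 0 < 1 - l := by linarith
  have hq : p + (1 - l)⁻¹ • (z - (l • (x - p) + p)) ∈ P := by
    apply hball
    rw [mem_closedBall, dist_eq_norm, add_sub_cancel_left, norm_smul, Real.norm_eq_abs,
      abs_of_pos (inv_pos.2 hl), inv_mul_le_iff₀ hl, ← dist_eq_norm]
    exact hz
  have hz : z = l • x + (1 - l) • (p + (1 - l)⁻¹ • (z - (l • (x - p) + p))) := by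
    rw [smul_add, smul_smul, mul_inv_cancel₀ hl.ne', one_smul]
    module
  rw [hz]
  exact hP hx hq hl₀ hl.le (by ring)

theorem AlternatingMap.norm_map_update_le [DecidableEq ι] (f : E [⋀^ι]→ₗ[ℝ] ℝ) {C M r : ℝ}
    (hC : 0 < C) (hf : ∀ v, ‖f v‖ ≤ C * ∏ i, ‖v i‖) {w : ι → E} {u : E} (i : ι)
    (hM : 1 ≤ M) (hw : ∀ j, ‖w j‖ ≤ M) (hr : 0 < r) (hu : ‖u‖ ≤ r) :
    ‖f (Function.update w i u)‖ ≤ C * M ^ Fintype.card ι * r := by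
  have hu' : ‖r⁻¹ • u‖ ≤ M := by
    rw [norm_smul, Real.norm_eq_abs, abs_inv, abs_of_pos hr, inv_mul_le_iff₀ hr]
    nlinarith
  have hbound : ∏ j, ‖Function.update w i (r⁻¹ • u) j‖ ≤ M ^ Fintype.card ι := by
    rw [← Finset.card_univ, ← Finset.prod_const]
    refine Finset.prod_le_prod (fun _ _ => norm_nonneg _) fun j _ => ?_
    rcases eq_or_ne j i with rfl | hj
    · rwa [Function.update_self]
    · rw [Function.update_of_ne hj]; exact hw j
  calc ‖f (Function.update w i u)‖ = ‖f (Function.update w i (r • r⁻¹ • u))‖ := by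
        rw [smul_inv_smul₀ hr.ne']
    _ = r * ‖f (Function.update w i (r⁻¹ • u))‖ := by
        rw [f.map_update_smul, norm_smul, Real.norm_eq_abs, abs_of_pos hr]
    _ ≤ r * (C * M ^ Fintype.card ι) :=
        mul_le_mul_of_nonneg_left ((hf _).trans (mul_le_mul_of_nonneg_left hbound hC.le)) hr.le
    _ = C * M ^ Fintype.card ι * r := by ring

end

theorem Module.Basis.exists_basis_det_mul_repr_eq_det_update {ι R M : Type*} [Fintype ι]
    [DecidableEq ι] [CommRing R] [AddCommGroup M] [Module R M] (e : Module.Basis ι R M)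
    {w : ι → M} (hw : IsUnit (e.det w)) :
    ∃ B : Module.Basis ι R M, ⇑B = w ∧
      ∀ u i, e.det w * B.repr u i = e.det (Function.update w i u) := by
  obtain ⟨hli, hsp⟩ := e.is_basis_iff_det.2 hw
  refine ⟨Module.Basis.mk hli hsp.ge, Module.Basis.coe_mk _ _, fun u i => ?_⟩
  simpa using LinearMap.congr_fun (e.det_smul_mk_coord_eq_det_update hli hsp.ge i) u

theorem Module.Basis.abs_repr_sub_le_one_of_isMaxOn {ι E : Type*} [Fintype ι] [DecidableEq ι]
    [AddCommGroup E] [Module ℝ E] (e : Module.Basis ι ℝ E)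
    {B : Module.Basis ι ℝ E} (hB₀ : 0 < |e.det B|)
    (hB : ∀ u i, e.det B * B.repr u i = e.det (Function.update B i u)) {P : Set E} {x : E}
    (hBP : ∀ i, x + B i ∈ P) (hmax : ∀ w : ι → E, (∀ i, x + w i ∈ P) → |e.det w| ≤ |e.det B|) :
    ∀ y ∈ P, ∀ i, |B.repr (y - x) i| ≤ 1 := by
  intro y hy i
  rw [← mul_le_mul_iff_of_pos_left hB₀, ← abs_mul, hB, mul_one]
  refine hmax _ fun j => ?_
  rcases eq_or_ne j i with rfl | hj
  · simpa using hy
  · simpa [Function.update_of_ne hj] using hBP j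

section

variable {ι E : Type*} [Fintype ι] [DecidableEq ι] [NormedAddCommGroup E] [NormedSpace ℝ E]
  [FiniteDimensional ℝ E]

theorem Module.Basis.continuous_det (e : Module.Basis ι ℝ E) : Continuous e.det := by
  have : ⇑e.det = fun v => (e.toMatrix v).det := funext e.det_apply
  rw [this]
  exact Continuous.matrix_det <| continuous_matrix fun i j =>
    (e.coord i).continuous_of_finiteDimensional.comp (continuous_apply j)

theorem Module.Basis.exists_isMaxOn_abs_det (e : Module.Basis ι ℝ E) {P : Set E}
    (hP : IsCompact P) {x : E} (hx : x ∈ P) :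
    ∃ w : ι → E, (∀ i, x + w i ∈ P) ∧
      ∀ w' : ι → E, (∀ i, x + w' i ∈ P) → |e.det w'| ≤ |e.det w| := by
  have hT : IsCompact (univ.pi fun _ : ι => (x + ·) ⁻¹' P) :=
    isCompact_univ_pi fun _ => (Homeomorph.addLeft x).isCompact_preimage.2 hP
  obtain ⟨w, hw, hmax⟩ := hT.exists_isMaxOn ⟨0, fun _ _ => by simpa using hx⟩
    e.continuous_det.abs.continuousOn
  exact ⟨w, fun i => hw i (mem_univ i), fun w' hw' => hmax fun i _ => hw' i⟩

end

theorem Convex.exists_closedBall_subset_of_measure_ne_zero {E : Type*} [NormedAddCommGroup E]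
    [NormedSpace ℝ E] [FiniteDimensional ℝ E] [MeasurableSpace E] [BorelSpace E]
    (μ : Measure E) [μ.IsAddHaarMeasure] {P : Set E} (hP : Convex ℝ P) (hμ : μ P ≠ 0) :
    ∃ x, ∃ s > 0, closedBall x s ⊆ P := by
  obtain ⟨x, hx⟩ : (interior P).Nonempty := by
    rw [hP.interior_nonempty_iff_affineSpan_eq_top]
    by_contra h
    exact hμ (measure_mono_null (subset_affineSpan ℝ P) (μ.addHaar_affineSubspace _ h))
  obtain ⟨s, hs, hsub⟩ := nhds_basis_closedBall.mem_iff.1 (mem_interior_iff_mem_nhds.1 hx)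
  exact ⟨x, s, hs, hsub⟩

section

variable {E : Type*} [NormedAddCommGroup E] [InnerProductSpace ℝ E] [FiniteDimensional ℝ E]
  [MeasurableSpace E] [BorelSpace E]

theorem volume_le_of_abs_repr_sub_le {ι : Type*} [Fintype ι] [DecidableEq ι]
    (b : OrthonormalBasis ι ℝ E) (B : Module.Basis ι ℝ E) {P : Set E} {x : E}
    (hP : ∀ y ∈ P, ∀ i, |B.repr (y - x) i| ≤ 1) :
    volume P ≤ ENNReal.ofReal (2 ^ Fintype.card ι * |b.toBasis.det B|) := by
  have hsub : P ⊆ (x - ∑ i, B i) +ᵥ parallelepiped fun i => (2 : ℝ) • B i := by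
    intro y hy
    rw [mem_vadd_set_iff_neg_vadd_mem, mem_parallelepiped_iff]
    refine ⟨fun i => (B.repr (y - x) i + 1) / 2, ⟨fun i => ?_, fun i => ?_⟩, ?_⟩
    · simp only [Pi.zero_apply]; linarith [abs_le.1 (hP y hy i)]
    · simp only [Pi.one_apply]; linarith [abs_le.1 (hP y hy i)]
    · rw [vadd_eq_add]
      simp only [smul_smul, div_mul_cancel₀ _ (two_ne_zero' ℝ), add_smul, one_smul,
        Finset.sum_add_distrib, B.sum_repr]
      abel
  calc volume P ≤ volume (parallelepiped fun i => (2 : ℝ) • B i) :=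
        (measure_mono hsub).trans_eq (measure_vadd _ _ _)
    _ = ENNReal.ofReal (2 ^ Fintype.card ι * |b.toBasis.det B|) := by
        rw [← b.addHaar_eq_volume, Measure.addHaar_parallelepiped, AlternatingMap.map_smul_univ]
        simp [abs_mul]

theorem exists_closedBall_subset_of_le_volume {K : Set E} (hK : Bornology.IsBounded K) {ν : ℝ}
    (hν : 0 < ν) :
    ∃ r > 0, ∀ P ⊆ K, IsCompact P → Convex ℝ P → ν ≤ (volume P).toReal →
      ∃ p, closedBall p r ⊆ P := by
  set b := stdOrthonormalBasis ℝ E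
  set e := b.toBasis
  set n := Fintype.card (Fin (Module.finrank ℝ E))
  obtain ⟨C, hC, hCe⟩ := e.det.exists_bound_of_continuous e.continuous_det
  set M := max (diam K) 1
  have hM : 1 ≤ M := le_max_right _ _
  refine ⟨ν / (2 ^ n * (2 * n + 1) * (C * M ^ n)), by positivity, ?_⟩
  intro P hPK hPc hPcv hPν
  obtain ⟨x, s, hs, hxs⟩ := hPcv.exists_closedBall_subset_of_measure_ne_zero volume
    (fun h => by rw [h, ENNReal.toReal_zero] at hPν; linarith)
  have hx : x ∈ P := hxs (mem_closedBall_self hs.le)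
  obtain ⟨w, hwP, hmax⟩ := e.exists_isMaxOn_abs_det hPc hx
  have hw : 0 < |e.det w| := by
    have hsb : ∀ i, x + s • b i ∈ P := fun i => hxs <| by
      simp [norm_smul, b.norm_eq_one, abs_of_pos hs]
    calc 0 < |s ^ n| := by positivity
      _ = |e.det fun i => s • e i| := by
        simp [AlternatingMap.map_smul_univ, e.det_self, n]
      _ ≤ |e.det w| := hmax _ (by simpa [e] using hsb)
  obtain ⟨B, rfl, hB⟩ :=
    e.exists_basis_det_mul_repr_eq_det_update (isUnit_iff_ne_zero.2 (abs_pos.1 hw))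
  have hvol : ν ≤ 2 ^ n * |e.det B| := by
    refine hPν.trans (ENNReal.toReal_le_of_le_ofReal (by positivity) ?_)
    exact volume_le_of_abs_repr_sub_le b B (e.abs_repr_sub_le_one_of_isMaxOn hw hB hwP hmax)
  refine ⟨x + ∑ i, (2 * n + 1 : ℝ)⁻¹ • B i,
    hPcv.closedBall_subset_of_abs_repr_le B hx hwP (fun u hu i => ?_) ?_⟩
  · have hBM : ∀ j, ‖B j‖ ≤ M := fun j =>
      calc ‖B j‖ = dist (x + B j) x := by simp [dist_eq_norm]
        _ ≤ M := (dist_le_diam_of_mem hK (hPK (hwP j)) (hPK hx)).trans (le_max_left _ _)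
    have hdet := e.det.norm_map_update_le hC hCe i hM hBM (by positivity) hu
    rw [← mul_le_mul_iff_of_pos_left hw, ← abs_mul, hB]
    calc |e.det (Function.update B i u)|
        ≤ C * M ^ n * (ν / (2 ^ n * (2 * n + 1) * (C * M ^ n))) := hdet
      _ = ν / 2 ^ n * (2 * n + 1 : ℝ)⁻¹ := by field_simp
      _ ≤ |e.det B| * (2 * n + 1 : ℝ)⁻¹ := by
          gcongr
          rw [div_le_iff₀ (by positivity)]
          linarith
  · field_simp
    linarith

end

theorem norm_le_of_mem_smallCube {n k : ℕ} {x : EuclideanSpace ℝ (Fin n)}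
    (hx : x ∈ smallCube n k) : ‖x‖ ≤ √n / (2 * k) := by
  rw [EuclideanSpace.norm_eq, div_eq_mul_one_div,
    ← Real.sqrt_sq (by positivity : 0 ≤ 1 / (2 * (k : ℝ))), ← Real.sqrt_mul n.cast_nonneg]
  gcongr
  calc ∑ i, ‖x i‖ ^ 2 ≤ ∑ _i : Fin n, (1 / (2 * (k : ℝ))) ^ 2 :=
        Finset.sum_le_sum fun i _ => by
          rw [Real.norm_eq_abs]
          exact pow_le_pow_left₀ (abs_nonneg _) (hx i) 2
    _ = n * (1 / (2 * (k : ℝ))) ^ 2 := by simp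

theorem exists_mem_lpts_sub_mem_smallCube {n k : ℕ} (hk : 0 < k)
    (y : EuclideanSpace ℝ (Fin n)) : ∃ z ∈ lpts n k, y - z ∈ smallCube n k := by
  have hk' : (0 : ℝ) < k := Nat.cast_pos.2 hk
  refine ⟨WithLp.toLp 2 fun i => round (k * y i) / k, fun i => ⟨round (k * y i), ?_⟩, fun i => ?_⟩
  · simp [mul_div_cancel₀ _ hk'.ne']
  · have h := abs_sub_round (k * y i)
    simp only [PiLp.sub_apply]
    rw [show y i - round (k * y i) / k = (k * y i - round (k * y i)) / k by field_simp,
      abs_div, abs_of_pos hk']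
    exact (div_le_div_of_nonneg_right h hk'.le).trans_eq (by ring)

theorem homothety_image_subset_lpts_add_smallCube {n k : ℕ} (hk : 0 < k)
    {P : Set (EuclideanSpace ℝ (Fin n))} (hP : Convex ℝ P) {p : EuclideanSpace ℝ (Fin n)}
    {r l : ℝ} (hball : closedBall p r ⊆ P) (hl₀ : 0 ≤ l) (hl₁ : l < 1)
    (hlr : √n / (2 * k) ≤ (1 - l) * r) :
    (fun x => l • (x - p) + p) '' P ⊆ (P ∩ lpts n k) + smallCube n k := by
  rintro _ ⟨x, hx, rfl⟩
  obtain ⟨z, hz, hyz⟩ := exists_mem_lpts_sub_mem_smallCube hk (l • (x - p) + p)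
  have hzP : z ∈ P := by
    refine hP.closedBall_homothety_subset hball hx hl₀ hl₁ ?_
    rw [mem_closedBall, dist_comm, dist_eq_norm]
    exact (norm_le_of_mem_smallCube hyz).trans hlr
  exact ⟨z, ⟨hzP, hz⟩, _, hyz, add_sub_cancel _ _⟩

theorem rpow_one_div_bounds {n : ℕ} (hn : 1 ≤ n) {ε : ℝ} (h₀ : 0 < ε) (h₁ : ε < 1) :
    0 ≤ (1 - ε) ^ ((1 : ℝ) / n) ∧ (1 - ε) ^ ((1 : ℝ) / n) < 1 ∧
      ε / n ≤ 1 - (1 - ε) ^ ((1 : ℝ) / n) := by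
  have hn₀ : (0 : ℝ) < n := by exact_mod_cast hn
  have hbern : (1 + -ε) ^ ((1 : ℝ) / n) ≤ 1 + 1 / n * -ε :=
    rpow_one_add_le_one_add_mul_self (by linarith) (by positivity)
      (by rw [div_le_one hn₀]; exact_mod_cast hn)
  rw [← sub_eq_add_neg] at hbern
  refine ⟨Real.rpow_nonneg (by linarith) _, ?_, ?_⟩ <;>
    linarith [div_pos h₀ hn₀, show 1 / (n : ℝ) * -ε = -(ε / n) by ring]

theorem stmt5_general (n : ℕ) (hn : 1 ≤ n) (K : Set (EuclideanSpace ℝ (Fin n)))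
    (hKcp : IsCompact K)
    (ν : ℝ) (hν : 0 < ν) :
    ∃ r : ℝ, 0 < r ∧ ∀ P : Set (EuclideanSpace ℝ (Fin n)),
      P ⊆ K → P.Nonempty → IsCompact P → Convex ℝ P → ν ≤ (volume P).toReal →
      ∀ k : ℕ, (n : ℝ) ^ ((3 : ℝ) / 2) / (2 * r) < (k : ℝ) →
      ∃ p ∈ P,
        (fun x => ((1 - (n : ℝ) ^ ((3 : ℝ) / 2) / (2 * r * (k : ℝ))) ^ ((1 : ℝ) / n))
              • (x - p) + p) '' P ⊆ P ∧
        (fun x => ((1 - (n : ℝ) ^ ((3 : ℝ) / 2) / (2 * r * (k : ℝ))) ^ ((1 : ℝ) / n))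
              • (x - p) + p) '' P ⊆ (P ∩ lpts n k) + smallCube n k := by
  obtain ⟨r, hr, hball⟩ := exists_closedBall_subset_of_le_volume hKcp.isBounded hν
  refine ⟨r, hr, fun P hPK _ hPc hPcv hPν k hk => ?_⟩
  obtain ⟨p, hp⟩ := hball P hPK hPc hPcv hPν
  have hk' : (0 : ℝ) < k := lt_of_le_of_lt (by positivity) hk
  have hn32 : (n : ℝ) ^ ((3 : ℝ) / 2) = n * √n := by
    rw [show (3 : ℝ) / 2 = 1 + 1 / 2 by norm_num, Real.rpow_add (by positivity), Real.rpow_one,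
      ← Real.sqrt_eq_rpow]
  set ε := (n : ℝ) ^ ((3 : ℝ) / 2) / (2 * r * k)
  have hε₁ : ε < 1 := by
    rw [div_lt_iff₀ (by positivity)] at hk
    rw [div_lt_one (by positivity)]
    linarith
  have hεr : ε / n * r = √n / (2 * k) := by
    simp only [ε, hn32]
    field_simp
  obtain ⟨hl₀, hl₁, hεl⟩ := rpow_one_div_bounds hn (by positivity) hε₁
  have hlr : √n / (2 * k) ≤ (1 - (1 - ε) ^ ((1 : ℝ) / n)) * r := by
    rw [← hεr]
    gcongr
  refine ⟨p, hp (mem_closedBall_self hr.le), ?_,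
    homothety_image_subset_lpts_add_smallCube (by exact_mod_cast hk') hPcv hp hl₀ hl₁ hlr⟩
  rintro _ ⟨x, hx, rfl⟩
  exact hPcv.closedBall_homothety_subset hp hx hl₀ hl₁ (mem_closedBall_self (by positivity))

theorem stmt5 (n : ℕ) (hn : 1 ≤ n) (K : Set (EuclideanSpace ℝ (Fin n)))
    (hKne : K.Nonempty) (hKcp : IsCompact K) (hKcv : Convex ℝ K)
    (ν : ℝ) (hν : 0 < ν) (hνK : ν ≤ (volume K).toReal) :
    ∃ r : ℝ, 0 < r ∧ ∀ P : Set (EuclideanSpace ℝ (Fin n)),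
      P ⊆ K → P.Nonempty → IsCompact P → Convex ℝ P → ν ≤ (volume P).toReal →
      ∀ k : ℕ, (n : ℝ) ^ ((3 : ℝ) / 2) / (2 * r) < (k : ℝ) →
      ∃ p ∈ P,
        (fun x => ((1 - (n : ℝ) ^ ((3 : ℝ) / 2) / (2 * r * (k : ℝ))) ^ ((1 : ℝ) / n))
              • (x - p) + p) '' P ⊆ P ∧
        (fun x => ((1 - (n : ℝ) ^ ((3 : ℝ) / 2) / (2 * r * (k : ℝ))) ^ ((1 : ℝ) / n))
              • (x - p) + p) '' P ⊆ (P ∩ lpts n k) + smallCube n k :=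
  stmt5_general n hn K hKcp ν hν
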